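/- arXiv:1111.6419 — 2 statements merged into one kernel-verified Lean document; each statement's English description precedes it below -/
import Mathlib

section
/- Let 0 < r < R and let q : EuclideanSpace ℝ (Fin 2) → ℝ be continuous on the closed annulus { x : r ≤ ‖x‖ ≤ R }, harmonic (C² with vanishing Laplacian) on the open annulus { x : r < ‖x‖ < R }, with q(x) = 1 whenever ‖x‖ = r and q(x) = 0 whenever ‖x‖ = R. Then q(x) = (log R − log ‖x‖)/(log R − log r) for all x with r ≤ ‖x‖ ≤ R. -/
/-!
The candidate `H x = (log R - log ‖x‖) / (log R - log r)` is harmonic off the origin, because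
`log ‖·‖` is harmonic on `ℂ \ {0}` and the Laplacian is invariant under linear isometries, and
it has the same boundary values as `q`. Uniqueness is the weak maximum principle: if `Δ u ≥ 0`
in `U` and `u ≤ 0` on `K \ U`, then `u + ε ‖x‖²` has positive Laplacian, so it cannot attain its
maximum over the compact set `K` in `U`, where the Hessian at a local maximum is negative
semidefinite; for small `ε` this forces `u ≤ 0`. Applied to `± (q - H)` it gives `q = H`.
-/

open Filter Topology Laplacian InnerProductSpace

section SecondDerivative

variable {E : Type*} [NormedAddCommGroup E] [NormedSpace ℝ E] {F : Type*} [NormedAddCommGroup F]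
  [NormedSpace ℝ F]

theorem IsLocalMax.deriv_deriv_nonpos {g : ℝ → ℝ} {a : ℝ} (h : IsLocalMax g a)
    (hc : ContinuousAt g a) : deriv (deriv g) a ≤ 0 := by
  by_contra! hpos
  -- A positive second derivative would make `a` a local minimum too, so `g` is locally constant.
  have hconst : g =ᶠ[𝓝 a] fun _ => g a :=
    (h.and (isLocalMin_of_deriv_deriv_pos hpos h.deriv_eq_zero hc)).mono
      fun t ht => le_antisymm ht.1 ht.2
  have hzero : deriv (deriv g) a = 0 := by simpa using hconst.deriv.deriv_eq
  exact hpos.ne' hzero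

theorem ContDiffAt.fderiv_fderiv_apply {f : E → F} {x : E} (hf : ContDiffAt ℝ 2 f x)
    (v w : E) :
    fderiv ℝ (fderiv ℝ f) x v w = fderiv ℝ (fun y => fderiv ℝ f y w) x v := by
  rw [fderiv_clm_apply ((hf.fderiv_right (m := 1) (by norm_num)).differentiableAt one_ne_zero)
    (differentiableAt_const w)]
  simp

theorem ContDiffAt.deriv_deriv_comp_add_smul {f : E → ℝ} {x : E} (hf : ContDiffAt ℝ 2 f x)
    (v : E) :
    deriv (deriv fun t : ℝ => f (x + t • v)) 0 = iteratedFDeriv ℝ 2 f x ![v, v] := by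
  have hline : ∀ t : ℝ, HasDerivAt (fun t : ℝ => x + t • v) v t := fun t => by
    simpa using ((hasDerivAt_id t).smul_const v).const_add x
  have hnear : ∀ᶠ t in 𝓝 (0 : ℝ), ContDiffAt ℝ 2 f (x + t • v) :=
    (hline 0).continuousAt.eventually (by simpa using hf.eventually (by simp))
  have hderiv :
      deriv (fun t : ℝ => f (x + t • v)) =ᶠ[𝓝 0] fun t => fderiv ℝ f (x + t • v) v :=
    hnear.mono fun t ht =>
      ((ht.differentiableAt (by norm_num)).hasFDerivAt.comp_hasDerivAt t (hline t)).deriv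
  have hdiff : DifferentiableAt ℝ (fun y => fderiv ℝ f y v) x :=
    ((hf.fderiv_right (m := 1) (by norm_num)).differentiableAt one_ne_zero).clm_apply
      (differentiableAt_const v)
  rw [hderiv.deriv_eq, iteratedFDeriv_two_apply]
  simp only [Matrix.cons_val_zero, Matrix.cons_val_one]
  rw [hf.fderiv_fderiv_apply]
  exact (hdiff.hasFDerivAt.comp_hasDerivAt_of_eq (0 : ℝ) (hline 0) (by simp)).deriv

theorem IsLocalMax.iteratedFDeriv_two_nonpos {f : E → ℝ} {x : E} (h : IsLocalMax f x)
    (hf : ContDiffAt ℝ 2 f x) (v : E) : iteratedFDeriv ℝ 2 f x ![v, v] ≤ 0 := by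
  have hline : Continuous fun t : ℝ => x + t • v := by fun_prop
  rw [← hf.deriv_deriv_comp_add_smul]
  refine IsLocalMax.deriv_deriv_nonpos ?_ ?_
  · exact IsLocalMax.comp_continuous (by simpa using h) hline.continuousAt
  · exact (hf.continuousAt.comp_of_eq hline.continuousAt (by simp))

end SecondDerivative

theorem isCompact_setOf_le_norm_le {F : Type*} [NormedAddCommGroup F] [ProperSpace F]
    (r R : ℝ) : IsCompact {x : F | r ≤ ‖x‖ ∧ ‖x‖ ≤ R} :=
  (isCompact_closedBall 0 R).of_isClosed_subset
    ((isClosed_le continuous_const continuous_norm).inter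
      (isClosed_le continuous_norm continuous_const))
    fun _ hx => mem_closedBall_zero_iff.2 hx.2

theorem isOpen_setOf_lt_norm_lt {F : Type*} [NormedAddCommGroup F] (r R : ℝ) :
    IsOpen {x : F | r < ‖x‖ ∧ ‖x‖ < R} :=
  (isOpen_lt continuous_const continuous_norm).inter (isOpen_lt continuous_norm continuous_const)

namespace InnerProductSpace

variable {E : Type*} [NormedAddCommGroup E] [InnerProductSpace ℝ E] [FiniteDimensional ℝ E]
  {G : Type*} [NormedAddCommGroup G] [InnerProductSpace ℝ G] [FiniteDimensional ℝ G]
  {F : Type*} [NormedAddCommGroup F] [NormedSpace ℝ F]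

theorem _root_.IsLocalMax.laplacian_nonpos {f : E → ℝ} {x : E} (h : IsLocalMax f x)
    (hf : ContDiffAt ℝ 2 f x) : Δ f x ≤ 0 := by
  rw [laplacian_eq_iteratedFDeriv_stdOrthonormalBasis]
  exact Finset.sum_nonpos fun i _ => h.iteratedFDeriv_two_nonpos hf _

theorem laplacian_norm_sq (x : E) :
    Δ (fun x : E => ‖x‖ ^ 2) x = 2 * Module.finrank ℝ E := by
  rw [laplacian_eq_iteratedFDeriv_stdOrthonormalBasis]
  have hD : fderiv ℝ (fun x : E => ‖x‖ ^ 2) = ⇑((2 : ℝ) • innerSL ℝ (E := E)) := by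
    ext y v
    simp [fderiv_norm_sq_apply]
  simp only [iteratedFDeriv_two_apply, hD]
  rw [ContinuousLinearMap.fderiv]
  change ∑ i, 2 * inner ℝ (stdOrthonormalBasis ℝ E i) (stdOrthonormalBasis ℝ E i) = _
  simp [mul_comm]

theorem laplacian_eq_sum_fderiv_fderiv_single {ι : Type*} [Fintype ι] [DecidableEq ι]
    {f : EuclideanSpace ℝ ι → F} {x : EuclideanSpace ℝ ι} (hf : ContDiffAt ℝ 2 f x) :
    Δ f x = ∑ i, fderiv ℝ (fun y => fderiv ℝ f y (EuclideanSpace.single i 1)) x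
      (EuclideanSpace.single i 1) := by
  rw [laplacian_eq_iteratedFDeriv_orthonormalBasis _ (EuclideanSpace.basisFun ι ℝ)]
  simp [iteratedFDeriv_two_apply, hf.fderiv_fderiv_apply]

theorem laplacian_comp_linearIsometryEquiv (f : E → F) (g : G ≃ₗᵢ[ℝ] E) (x : G) :
    Δ (f ∘ g) x = Δ f (g x) := by
  let b := stdOrthonormalBasis ℝ G
  rw [laplacian_eq_iteratedFDeriv_orthonormalBasis _ b,
    laplacian_eq_iteratedFDeriv_orthonormalBasis _ (b.map g)]
  have hcomp := g.toContinuousLinearEquiv.iteratedFDerivWithin_comp_right f uniqueDiffOn_univ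
    (Set.mem_univ (g x)) 2
  simp only [Set.preimage_univ, iteratedFDerivWithin_univ] at hcomp
  change ∑ i, iteratedFDeriv ℝ 2 (f ∘ g.toContinuousLinearEquiv) x ![b i, b i] = _
  rw [hcomp]
  refine Finset.sum_congr rfl fun i _ => ?_
  simp only [ContinuousMultilinearMap.compContinuousLinearMap_apply, b.map_apply]
  congr 1
  ext j
  fin_cases j <;> rfl

theorem HarmonicAt.comp_linearIsometryEquiv {f : E → F} (g : G ≃ₗᵢ[ℝ] E) {x : G}
    (h : HarmonicAt f (g x)) :
    HarmonicAt (f ∘ g) x :=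
  ⟨h.1.comp x g.contDiff.contDiffAt, ((g.continuous.tendsto x).eventually h.2).mono
    fun y hy => by rw [Pi.zero_apply, laplacian_comp_linearIsometryEquiv]; exact hy⟩

theorem harmonicAt_log_norm (hE : Module.finrank ℝ E = 2) {x : E} (hx : x ≠ 0) :
    HarmonicAt (fun y => Real.log ‖y‖) x := by
  let g : E ≃ₗᵢ[ℝ] ℂ := ((stdOrthonormalBasis ℝ E).reindex (finCongr hE)).repr.trans
    Complex.orthonormalBasisOneI.repr.symm
  have := HarmonicAt.comp_linearIsometryEquiv g
    (analyticAt_id.harmonicAt_log_norm (z := g x) (by simpa using hx))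
  simpa [Function.comp_def] using this

theorem exists_isMaxOn_sdiff_of_laplacian_pos {w : E → ℝ} {K U : Set E} (hK : IsCompact K)
    (hne : K.Nonempty) (hU : IsOpen U) (hUK : U ⊆ K) (hcont : ContinuousOn w K)
    (hw : ∀ x ∈ U, ContDiffAt ℝ 2 w x) (hpos : ∀ x ∈ U, 0 < Δ w x) :
    ∃ x₀ ∈ K \ U, IsMaxOn w K x₀ := by
  obtain ⟨x₀, hx₀K, hmax⟩ := hK.exists_isMaxOn hne hcont
  refine ⟨x₀, ⟨hx₀K, fun hx₀U => ?_⟩, hmax⟩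
  have hloc : IsLocalMax w x₀ := hmax.isLocalMax (mem_of_superset (hU.mem_nhds hx₀U) hUK)
  exact (hpos x₀ hx₀U).not_ge (hloc.laplacian_nonpos (hw x₀ hx₀U))

theorem le_zero_of_laplacian_nonneg [Nontrivial E] {u : E → ℝ} {K U : Set E}
    (hK : IsCompact K) (hU : IsOpen U) (hUK : U ⊆ K) (hcont : ContinuousOn u K)
    (hu : ∀ x ∈ U, ContDiffAt ℝ 2 u x) (hsub : ∀ x ∈ U, 0 ≤ Δ u x)
    (hbdry : ∀ x ∈ K \ U, u x ≤ 0) {x : E} (hx : x ∈ K) : u x ≤ 0 := by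
  by_contra! hux
  obtain ⟨C, hC⟩ : ∃ C, ∀ y ∈ K, ‖y‖ ^ 2 ≤ C := by
    obtain ⟨C, hC⟩ := (hK.image_of_continuousOn (continuous_norm.pow 2).continuousOn).bddAbove
    exact ⟨C, fun y hy => hC ⟨y, hy, rfl⟩⟩
  have hC₀ : 0 ≤ C := (sq_nonneg _).trans (hC x hx)
  set ε := u x / (2 * (C + 1))
  have hε : 0 < ε := by positivity
  have hεC : ε * C < u x := by
    rw [div_mul_eq_mul_div, div_lt_iff₀ (by positivity)]
    nlinarith
  have hsq : ContDiff ℝ 2 fun y : E => ‖y‖ ^ 2 := contDiff_norm_sq ℝ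
  have hεsq : ContDiff ℝ 2 (ε • fun y : E => ‖y‖ ^ 2) := hsq.const_smul ε
  have hdim : (0 : ℝ) < Module.finrank ℝ E := by exact_mod_cast Module.finrank_pos
  obtain ⟨x₀, ⟨hx₀K, hx₀U⟩, hmax⟩ :=
    exists_isMaxOn_sdiff_of_laplacian_pos (w := u + ε • fun y => ‖y‖ ^ 2) hK ⟨x, hx⟩ hU hUK
      (hcont.add hεsq.continuous.continuousOn) (fun y hy => (hu y hy).add hεsq.contDiffAt)
      fun y hy => by
        rw [(hu y hy).laplacian_add hεsq.contDiffAt, laplacian_smul _ hsq.contDiffAt,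
          laplacian_norm_sq]
        exact add_pos_of_nonneg_of_pos (hsub y hy) (by positivity)
  refine lt_irrefl (u x) ?_
  calc u x ≤ u x + ε * ‖x‖ ^ 2 := le_add_of_nonneg_right (by positivity)
    _ ≤ u x₀ + ε * ‖x₀‖ ^ 2 := hmax hx
    _ ≤ 0 + ε * C :=
      add_le_add (hbdry x₀ ⟨hx₀K, hx₀U⟩) (mul_le_mul_of_nonneg_left (hC x₀ hx₀K) hε.le)
    _ < u x := by rwa [zero_add]

theorem HarmonicOnNhd.eqOn_of_eqOn_sdiff [Nontrivial E] {f g : E → ℝ} {K U : Set E}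
    (hK : IsCompact K) (hU : IsOpen U) (hUK : U ⊆ K) (hf : HarmonicOnNhd f U)
    (hg : HarmonicOnNhd g U) (hfc : ContinuousOn f K) (hgc : ContinuousOn g K)
    (hfg : Set.EqOn f g (K \ U)) : Set.EqOn f g K := by
  have hle : ∀ {u v : E → ℝ}, HarmonicOnNhd u U → HarmonicOnNhd v U → ContinuousOn u K →
      ContinuousOn v K → Set.EqOn u v (K \ U) → ∀ x ∈ K, u x ≤ v x := by
    intro u v hu hv huc hvc huv x hx
    have h := hu.sub hv
    exact sub_nonpos.1 <| le_zero_of_laplacian_nonneg hK hU hUK (huc.sub hvc)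
      (fun y hy => (h y hy).1) (fun y hy => (h y hy).2.self_of_nhds.ge)
      (fun y hy => sub_nonpos.2 (huv hy).le) hx
  exact fun x hx => le_antisymm (hle hf hg hfc hgc hfg x hx) (hle hg hf hgc hfc hfg.symm x hx)

end InnerProductSpace

theorem bm_escape_probability_annulus_uniqueness
    (r R : ℝ) (hr : 0 < r) (hrR : r < R)
    (q : EuclideanSpace ℝ (Fin 2) → ℝ)
    (hcont : ContinuousOn q {x : EuclideanSpace ℝ (Fin 2) | r ≤ ‖x‖ ∧ ‖x‖ ≤ R})
    (hsmooth : ContDiffOn ℝ 2 q {x : EuclideanSpace ℝ (Fin 2) | r < ‖x‖ ∧ ‖x‖ < R})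
    (hharm : ∀ x ∈ {x : EuclideanSpace ℝ (Fin 2) | r < ‖x‖ ∧ ‖x‖ < R},
      ∑ i : Fin 2,
        fderiv ℝ (fun y => fderiv ℝ q y (EuclideanSpace.single i (1 : ℝ))) x
          (EuclideanSpace.single i (1 : ℝ)) = 0)
    (hinner : ∀ x : EuclideanSpace ℝ (Fin 2), ‖x‖ = r → q x = 1)
    (houter : ∀ x : EuclideanSpace ℝ (Fin 2), ‖x‖ = R → q x = 0) :
    ∀ x : EuclideanSpace ℝ (Fin 2), r ≤ ‖x‖ → ‖x‖ ≤ R →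
      q x = (Real.log R - Real.log ‖x‖) / (Real.log R - Real.log r) := by
  set K := {x : EuclideanSpace ℝ (Fin 2) | r ≤ ‖x‖ ∧ ‖x‖ ≤ R}
  set U := {x : EuclideanSpace ℝ (Fin 2) | r < ‖x‖ ∧ ‖x‖ < R}
  set L := Real.log R - Real.log r
  have hL : L ≠ 0 := (sub_pos.2 (Real.log_lt_log hr hrR)).ne'
  have hK : IsCompact K := isCompact_setOf_le_norm_le r R
  have hU : IsOpen U := isOpen_setOf_lt_norm_lt r R
  have hUK : U ⊆ K := fun x hx => ⟨hx.1.le, hx.2.le⟩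
  have hq : HarmonicOnNhd q U := fun x hx =>
    ⟨hsmooth.contDiffAt (hU.mem_nhds hx), by
      filter_upwards [hU.mem_nhds hx] with y hy
      rw [laplacian_eq_sum_fderiv_fderiv_single (hsmooth.contDiffAt (hU.mem_nhds hy))]
      exact hharm y hy⟩
  have hH : HarmonicOnNhd (fun x => (Real.log R - Real.log ‖x‖) / L) U := fun x hx => by
    have hlog := harmonicAt_log_norm finrank_euclideanSpace_fin (norm_pos_iff.1 (hr.trans hx.1))
    convert ((harmonicAt_const (Real.log R)).sub hlog).const_smul (c := L⁻¹) using 1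
    ext y
    simp [div_eq_inv_mul]
  have hHc : ContinuousOn (fun x => (Real.log R - Real.log ‖x‖) / L) K :=
    (continuousOn_const.sub (continuous_norm.continuousOn.log fun x hx =>
      (hr.trans_le hx.1).ne')).div_const L
  refine fun x h₁ h₂ =>
    hq.eqOn_of_eqOn_sdiff hK hU hUK hH hcont hHc (fun y ⟨hyK, hyU⟩ => ?_) ⟨h₁, h₂⟩
  change q y = (Real.log R - Real.log ‖y‖) / L
  rcases hyK.1.eq_or_lt with hy | hy
  · rw [hinner y hy.symm, ← hy, div_self hL]
  · have hyR : ‖y‖ = R := hyK.2.eq_of_not_lt fun h => hyU ⟨hy, h⟩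
    rw [houter y hyR, hyR, sub_self, zero_div]
end

section
/- Let α ∈ (0,2), r > 0, and x ∈ (−r, r). Then the function y ↦ (r² − x²)^{α/2}·(y² − r²)^{−α/2}·(y − x)^{−1} is integrable on (r, ∞), and, defining p(x) = (sin(πα/2)/π) · ∫_r^∞ (r² − x²)^{α/2}·(y² − r²)^{−α/2}·(y − x)^{−1} dy, one has p(x) → 0 as x → −r from the right. -/
/-!
The kernel `(y² - r²)^(-α/2) (y - x)⁻¹` behaves like `(y - r)^(-α/2)` near `y = r` and like
`y^(-α-1)` at infinity, so it is integrable for `0 < α < 2`. For `x ≤ 0` it is dominated by its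
value at `x = 0`, hence `|p x| ≤ C (r² - x²)^(α/2)`, which vanishes as `x → -r`.
-/

open MeasureTheory Set Filter Topology

section

variable {r s x y : ℝ}

lemma integrableOn_Ioc_rpow_sub_neg (hs : s < 1) (a b : ℝ) :
    IntegrableOn (fun y : ℝ => (y - a) ^ (-s)) (Ioc a b) := by
  have h := (intervalIntegral.intervalIntegrable_rpow' (a := 0) (b := b - a)
    (by linarith : -1 < -s)).comp_sub_right a
  simpa only [zero_add, sub_add_cancel] using h.1

lemma rpow_sq_sub_sq_neg_mul_inv_sub_nonneg (hr : 0 ≤ r) (hx : x < r) (hy : r < y) :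
    0 ≤ (y ^ 2 - r ^ 2) ^ (-s) * (y - x)⁻¹ := by
  have : 0 ≤ y ^ 2 - r ^ 2 := by nlinarith
  have : 0 ≤ y - x := by linarith
  positivity

lemma rpow_sq_sub_sq_neg_le (hr : 0 < r) (hs : 0 ≤ s) (hy : r < y) :
    (y ^ 2 - r ^ 2) ^ (-s) ≤ (2 * r) ^ (-s) * (y - r) ^ (-s) := by
  rw [← Real.mul_rpow (by positivity) (by linarith)]
  exact Real.rpow_le_rpow_of_nonpos (by nlinarith) (by nlinarith) (by linarith)

lemma rpow_sq_sub_sq_neg_mul_inv_sub_le (hr : 0 < r) (hs : 0 ≤ s) (hx : x < r) (hy : 2 * r < y) :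
    (y ^ 2 - r ^ 2) ^ (-s) * (y - x)⁻¹ ≤ 2 ^ s * 2 * y ^ (-2 * s - 1) := by
  have hy₀ : 0 < y := by linarith
  have hsq : (y ^ 2 - r ^ 2) ^ (-s) ≤ 2 ^ s * y ^ (-2 * s) := by
    calc (y ^ 2 - r ^ 2) ^ (-s) ≤ (2⁻¹ * y ^ 2) ^ (-s) :=
          Real.rpow_le_rpow_of_nonpos (by positivity) (by nlinarith) (by linarith)
      _ = 2 ^ s * y ^ (-2 * s) := by
          rw [Real.mul_rpow (by norm_num) (by positivity), Real.inv_rpow (by norm_num),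
            Real.rpow_neg (by norm_num), inv_inv, ← Real.rpow_natCast_mul hy₀.le]
          norm_num
  have hyx : 0 < y - x := by linarith
  have hinv : (y - x)⁻¹ ≤ 2 * y ^ (-1 : ℝ) := by
    rw [Real.rpow_neg_one, show 2 * y⁻¹ = (y / 2)⁻¹ by rw [inv_div, div_eq_mul_inv]]
    exact inv_anti₀ (by positivity) (by linarith)
  calc (y ^ 2 - r ^ 2) ^ (-s) * (y - x)⁻¹ ≤ 2 ^ s * y ^ (-2 * s) * (2 * y ^ (-1 : ℝ)) :=
        mul_le_mul hsq hinv (by positivity) (by positivity)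
    _ = 2 ^ s * 2 * y ^ (-2 * s - 1) := by
        rw [sub_eq_add_neg, Real.rpow_add hy₀]
        ring

theorem integrableOn_rpow_sq_sub_sq_neg_mul_inv_sub (hs₀ : 0 < s) (hs₁ : s < 1) (hr : 0 < r)
    (hx : x < r) :
    IntegrableOn (fun y : ℝ => (y ^ 2 - r ^ 2) ^ (-s) * (y - x)⁻¹) (Ioi r) := by
  have hmeas : AEStronglyMeasurable (fun y : ℝ => (y ^ 2 - r ^ 2) ^ (-s) * (y - x)⁻¹) :=
    (by measurability : Measurable _).aestronglyMeasurable
  rw [← Ioc_union_Ioi_eq_Ioi (by linarith : r ≤ 2 * r)]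
  refine IntegrableOn.union ?_ ?_
  · refine ((integrableOn_Ioc_rpow_sub_neg hs₁ r (2 * r)).const_mul
      ((2 * r) ^ (-s) * (r - x)⁻¹)).mono' hmeas.restrict ?_
    filter_upwards [ae_restrict_mem measurableSet_Ioc] with y ⟨hry, _⟩
    rw [Real.norm_of_nonneg (rpow_sq_sub_sq_neg_mul_inv_sub_nonneg hr.le hx hry)]
    calc (y ^ 2 - r ^ 2) ^ (-s) * (y - x)⁻¹ ≤ (2 * r) ^ (-s) * (y - r) ^ (-s) * (r - x)⁻¹ :=
          mul_le_mul (rpow_sq_sub_sq_neg_le hr hs₀.le hry)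
            (inv_anti₀ (by linarith) (by linarith)) (inv_nonneg.2 (by linarith)) (by positivity)
      _ = _ := by ring
  · refine ((integrableOn_Ioi_rpow_of_lt (by linarith : -2 * s - 1 < -1)
      (by positivity : 0 < 2 * r)).const_mul (2 ^ s * 2)).mono' hmeas.restrict ?_
    filter_upwards [ae_restrict_mem measurableSet_Ioi] with y (hy : 2 * r < y)
    rw [Real.norm_of_nonneg
      (rpow_sq_sub_sq_neg_mul_inv_sub_nonneg hr.le hx (by linarith))]
    exact rpow_sq_sub_sq_neg_mul_inv_sub_le hr hs₀.le hx hy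

theorem setIntegral_rpow_sq_sub_sq_neg_mul_inv_sub_nonneg (hr : 0 ≤ r) (hx : x < r) :
    0 ≤ ∫ y in Ioi r, (y ^ 2 - r ^ 2) ^ (-s) * (y - x)⁻¹ :=
  setIntegral_nonneg measurableSet_Ioi fun _ hy =>
    rpow_sq_sub_sq_neg_mul_inv_sub_nonneg hr hx hy

theorem setIntegral_rpow_sq_sub_sq_neg_mul_inv_sub_le (hs₀ : 0 < s) (hs₁ : s < 1) (hr : 0 < r)
    (hx : x ≤ 0) :
    ∫ y in Ioi r, (y ^ 2 - r ^ 2) ^ (-s) * (y - x)⁻¹ ≤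
      ∫ y in Ioi r, (y ^ 2 - r ^ 2) ^ (-s) * y⁻¹ := by
  refine setIntegral_mono_on
    (integrableOn_rpow_sq_sub_sq_neg_mul_inv_sub hs₀ hs₁ hr (by linarith))
    (by simpa using integrableOn_rpow_sq_sub_sq_neg_mul_inv_sub hs₀ hs₁ hr hr)
    measurableSet_Ioi fun y (hy : r < y) => ?_
  have : 0 ≤ y ^ 2 - r ^ 2 := by nlinarith
  exact mul_le_mul_of_nonneg_left (inv_anti₀ (by linarith) (by linarith)) (by positivity)

theorem tendsto_rpow_sq_sub_sq_nhds_neg (hs : 0 < s) :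
    Tendsto (fun x : ℝ => (r ^ 2 - x ^ 2) ^ s) (𝓝 (-r)) (𝓝 0) := by
  have h : Continuous fun x : ℝ => (r ^ 2 - x ^ 2) ^ s :=
    (continuous_const.sub (continuous_pow 2)).rpow_const fun _ => Or.inr hs.le
  simpa [Real.zero_rpow hs.ne'] using h.tendsto (-r)

end

theorem stable_escape_poisson_kernel_left_boundary
    (α r : ℝ) (hα : α ∈ Set.Ioo (0 : ℝ) 2) (hr : 0 < r) :
    (∀ x ∈ Set.Ioo (-r) r,
      IntegrableOn
        (fun y : ℝ => (r ^ 2 - x ^ 2) ^ (α / 2) * (y ^ 2 - r ^ 2) ^ (-(α / 2)) * (y - x)⁻¹)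
        (Set.Ioi r)) ∧
    Filter.Tendsto
      (fun x : ℝ => (Real.sin (Real.pi * α / 2) / Real.pi) *
        ∫ y in Set.Ioi r,
          (r ^ 2 - x ^ 2) ^ (α / 2) * (y ^ 2 - r ^ 2) ^ (-(α / 2)) * (y - x)⁻¹)
      (nhdsWithin (-r) (Set.Ioi (-r))) (nhds 0) := by
  have hs₀ : 0 < α / 2 := by linarith [hα.1]
  have hs₁ : α / 2 < 1 := by linarith [hα.2]
  set c := Real.sin (Real.pi * α / 2) / Real.pi
  set M := ∫ y in Ioi r, (y ^ 2 - r ^ 2) ^ (-(α / 2)) * y⁻¹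
  refine ⟨fun x hx => ?_, ?_⟩
  · simpa only [mul_assoc, IntegrableOn] using
      (integrableOn_rpow_sq_sub_sq_neg_mul_inv_sub hs₀ hs₁ hr hx.2).const_mul
        ((r ^ 2 - x ^ 2) ^ (α / 2))
  have hbound := ((tendsto_rpow_sq_sub_sq_nhds_neg (r := r) hs₀).mono_left
    (nhdsWithin_le_nhds (s := Ioi (-r)))).const_mul (|c| * M)
  rw [mul_zero] at hbound
  refine squeeze_zero_norm' ?_ hbound
  filter_upwards [Ioo_mem_nhdsGT (by linarith : -r < 0)] with x ⟨hrx, hx₀⟩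
  have hA : 0 ≤ (r ^ 2 - x ^ 2) ^ (α / 2) := Real.rpow_nonneg (by nlinarith) _
  simp_rw [mul_assoc, integral_const_mul, norm_mul, Real.norm_eq_abs, abs_of_nonneg hA,
    abs_of_nonneg (setIntegral_rpow_sq_sub_sq_neg_mul_inv_sub_nonneg (x := x) hr.le
      (by linarith))]
  calc |c| * ((r ^ 2 - x ^ 2) ^ (α / 2) * _) ≤ |c| * ((r ^ 2 - x ^ 2) ^ (α / 2) * M) := by
        gcongr
        exact setIntegral_rpow_sq_sub_sq_neg_mul_inv_sub_le hs₀ hs₁ hr hx₀.le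
    _ = |c| * (M * (r ^ 2 - x ^ 2) ^ (α / 2)) := by ring
end
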